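/- arXiv:2404.10325 — 4 statements merged into one kernel-verified Lean document; each statement's English description precedes it below -/
import Mathlib

section
/- For every realization of the colors, the modularity admits the decomposition Q_n = ((1 − p_{(2)})/(2m)) Σ_{i=1}^n B_{ii} + (1/m) Σ_{1≤i<j≤n} B_{ij} h̄(c_i, c_j) − (1/m) Σ_{i=1}^n B_{ii} (p_{c_i} − p_{(2)}). -/
open Finset

/-!
Because the degrees sum to `2m`, every row (and, by symmetry, every column) of the modularity
matrix `B` sums to zero. Hence in `∑ᵢⱼ Bᵢⱼ δ(cᵢ, cⱼ)` the Kronecker delta may be replaced by its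
doubly centred version `h̄(cᵢ, cⱼ) = δ(cᵢ, cⱼ) - p_{cᵢ} - p_{cⱼ} + p₍₂₎` without changing the sum.
Since `B` and `h̄` are symmetric, the resulting double sum is its diagonal plus twice its strict
upper triangle, and on the diagonal `h̄(c, c) = (1 - p₍₂₎) - 2 (p_c - p₍₂₎)`.
-/

theorem Finset.Icc_filter_gt_of_left_le {α : Type*} [LinearOrder α] [LocallyFiniteOrder α]
    {a b c : α} (hac : a ≤ c) : {x ∈ Icc a b | c < x} = Ioc c b := by
  grind

section DoubleSum

variable {ι R : Type*} {s : Finset ι}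

theorem sum_sum_eq_sum_diag_add_two_mul_sum_lt [LinearOrder ι] [CommSemiring R] {f : ι → ι → R}
    (hf : ∀ i ∈ s, ∀ j ∈ s, f i j = f j i) :
    ∑ i ∈ s, ∑ j ∈ s, f i j
      = ∑ i ∈ s, f i i + 2 * ∑ i ∈ s, ∑ j ∈ s with i < j, f i j := by
  have hsplit : ∀ i j, f i j
      = (if j < i then f i j else 0) + (if i = j then f i j else 0)
        + (if i < j then f i j else 0) := by
    intro i j
    rcases lt_trichotomy i j with h | rfl | h
    · simp [h, h.ne, h.not_gt]
    · simp
    · simp [h, h.ne', h.not_gt]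
  have hlower : ∑ i ∈ s, ∑ j ∈ s, (if j < i then f i j else 0)
      = ∑ i ∈ s, ∑ j ∈ s with i < j, f i j := by
    rw [sum_comm]
    refine sum_congr rfl fun i hi => ?_
    rw [sum_filter]
    exact sum_congr rfl fun j hj => by rw [hf j hj i hi]
  rw [sum_congr rfl fun i _ => sum_congr rfl fun j _ => hsplit i j]
  simp only [sum_add_distrib, sum_ite_eq]
  rw [hlower]
  simp +contextual only [if_true, sum_filter]
  ring

theorem sum_sum_mul_sub_add_eq_of_row_col_sum_eq_zero [CommRing R] {B : ι → ι → R}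
    (hrow : ∀ i ∈ s, ∑ j ∈ s, B i j = 0) (hcol : ∀ j ∈ s, ∑ i ∈ s, B i j = 0)
    (F : ι → ι → R) (u v : ι → R) (a : R) :
    ∑ i ∈ s, ∑ j ∈ s, B i j * (F i j - u i - v j + a) = ∑ i ∈ s, ∑ j ∈ s, B i j * F i j := by
  have hu : ∑ i ∈ s, ∑ j ∈ s, B i j * u i = 0 :=
    sum_eq_zero fun i hi => by rw [← sum_mul, hrow i hi, zero_mul]
  have hv : ∑ i ∈ s, ∑ j ∈ s, B i j * v j = 0 := by
    rw [sum_comm]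
    exact sum_eq_zero fun j hj => by rw [← sum_mul, hcol j hj, zero_mul]
  have ha : ∑ i ∈ s, ∑ j ∈ s, B i j * a = 0 :=
    sum_eq_zero fun i hi => by rw [← sum_mul, hrow i hi, zero_mul]
  simp only [mul_add, mul_sub, sum_add_distrib, sum_sub_distrib, hu, hv, ha]
  ring

end DoubleSum

theorem sum_modularity_row_eq_zero {ι K : Type*} [Field K] {s : Finset ι} {A B : ι → ι → K}
    {k : ι → K} {M : K} (hM : M ≠ 0) (hk : ∀ i ∈ s, k i = ∑ j ∈ s, A i j) (hksum : ∑ i ∈ s, k i = M)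
    (hB : ∀ i j, B i j = A i j - k i * k j / M) {i : ι} (hi : i ∈ s) :
    ∑ j ∈ s, B i j = 0 := by
  simp only [hB, sum_sub_distrib, ← hk i hi, mul_div_assoc, ← mul_sum, ← sum_div, hksum,
    div_self hM, mul_one, sub_self]

theorem modularity_decomposition_general
    (n : ℕ) (A : ℕ → ℕ → ℝ) (m : ℕ) (k : ℕ → ℝ)
    (hAsymm : ∀ i ∈ Icc 1 n, ∀ j ∈ Icc 1 n, A i j = A j i)
    (hm : 1 ≤ m)
    (hk : ∀ i ∈ Icc 1 n, k i = ∑ j ∈ Icc 1 n, A i j)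
    (hksum : ∑ i ∈ Icc 1 n, k i = 2 * (m : ℝ))
    (p : ℕ → ℝ)
    (p2 : ℝ)
    (c : ℕ → ℕ)
    (B : ℕ → ℕ → ℝ) (hB : ∀ i j, B i j = A i j - k i * k j / (2 * (m : ℝ)))
    (hbar : ℕ → ℕ → ℝ)
    (hhbar : ∀ x y, hbar x y = (if x = y then (1 : ℝ) else 0) - p x - p y + p2)
    (Q : ℝ)
    (hQ : Q = (1 / (2 * (m : ℝ))) *
      ∑ i ∈ Icc 1 n, ∑ j ∈ Icc 1 n, B i j * (if c i = c j then (1 : ℝ) else 0)) :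
    Q = ((1 - p2) / (2 * (m : ℝ))) * (∑ i ∈ Icc 1 n, B i i)
      + (1 / (m : ℝ)) * ∑ i ∈ Icc 1 n, ∑ j ∈ Ioc i n, B i j * hbar (c i) (c j)
      - (1 / (m : ℝ)) * ∑ i ∈ Icc 1 n, B i i * (p (c i) - p2) := by
  have hm0 : (m : ℝ) ≠ 0 := Nat.cast_ne_zero.mpr (by omega)
  have hrow : ∀ i ∈ Icc 1 n, ∑ j ∈ Icc 1 n, B i j = 0 := fun i hi =>
    sum_modularity_row_eq_zero (by simpa using hm0) hk hksum hB hi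
  have hBsymm : ∀ i ∈ Icc 1 n, ∀ j ∈ Icc 1 n, B i j = B j i := fun i hi j hj => by
    rw [hB, hB, hAsymm i hi j hj, mul_comm (k i)]
  have hcol : ∀ j ∈ Icc 1 n, ∑ i ∈ Icc 1 n, B i j = 0 := fun j hj => by
    rw [← hrow j hj]
    exact sum_congr rfl fun i hi => hBsymm i hi j hj
  have hcentred := sum_sum_mul_sub_add_eq_of_row_col_sum_eq_zero hrow hcol
    (fun i j => if c i = c j then (1 : ℝ) else 0) (p ∘ c) (p ∘ c) p2
  have hsymm : ∀ i ∈ Icc 1 n, ∀ j ∈ Icc 1 n,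
      B i j * hbar (c i) (c j) = B j i * hbar (c j) (c i) := fun i hi j hj => by
    simp only [hBsymm i hi j hj, hhbar, eq_comm (a := c i)]
    ring
  have hupper : ∑ i ∈ Icc 1 n, ∑ j ∈ Icc 1 n with i < j, B i j * hbar (c i) (c j)
      = ∑ i ∈ Icc 1 n, ∑ j ∈ Ioc i n, B i j * hbar (c i) (c j) :=
    sum_congr rfl fun i hi => by rw [Icc_filter_gt_of_left_le (mem_Icc.mp hi).1]
  have hdiag : ∀ i, B i i * hbar (c i) (c i) = (1 - p2) * B i i - 2 * (B i i * (p (c i) - p2)) :=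
    fun i => by rw [hhbar, if_pos rfl]; ring
  simp only [Function.comp_apply, ← hhbar] at hcentred
  rw [hQ, ← hcentred, sum_sum_eq_sum_diag_add_two_mul_sum_lt hsymm, hupper,
    sum_congr rfl fun i _ => hdiag i,
    sum_sub_distrib, ← mul_sum, ← mul_sum]
  field_simp
  ring

/-- The decomposition of the modularity (equation (4.1) of the paper). -/
theorem modularity_decomposition
    (n : ℕ) (A : ℕ → ℕ → ℝ) (m : ℕ) (k : ℕ → ℝ)
    (hA01 : ∀ i ∈ Icc 1 n, ∀ j ∈ Icc 1 n, A i j = 0 ∨ A i j = 1)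
    (hAsymm : ∀ i ∈ Icc 1 n, ∀ j ∈ Icc 1 n, A i j = A j i)
    (hAdiag : ∀ i ∈ Icc 1 n, A i i = 0)
    (hm : 1 ≤ m)
    (hk : ∀ i ∈ Icc 1 n, k i = ∑ j ∈ Icc 1 n, A i j)
    (hksum : ∑ i ∈ Icc 1 n, k i = 2 * (m : ℝ))
    (K : ℕ) (hK : 1 ≤ K) (p : ℕ → ℝ)
    (hp0 : ∀ j ∈ Icc 1 K, 0 ≤ p j) (hp1 : ∑ j ∈ Icc 1 K, p j = 1)
    (p2 : ℝ) (hp2 : p2 = ∑ j ∈ Icc 1 K, (p j) ^ 2)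
    (c : ℕ → ℕ) (hc : ∀ i ∈ Icc 1 n, c i ∈ Icc 1 K)
    (B : ℕ → ℕ → ℝ) (hB : ∀ i j, B i j = A i j - k i * k j / (2 * (m : ℝ)))
    (hbar : ℕ → ℕ → ℝ)
    (hhbar : ∀ x y, hbar x y = (if x = y then (1 : ℝ) else 0) - p x - p y + p2)
    (Q : ℝ)
    (hQ : Q = (1 / (2 * (m : ℝ))) *
      ∑ i ∈ Icc 1 n, ∑ j ∈ Icc 1 n, B i j * (if c i = c j then (1 : ℝ) else 0)) :
    Q = ((1 - p2) / (2 * (m : ℝ))) * (∑ i ∈ Icc 1 n, B i i)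
      + (1 / (m : ℝ)) * ∑ i ∈ Icc 1 n, ∑ j ∈ Ioc i n, B i j * hbar (c i) (c j)
      - (1 / (m : ℝ)) * ∑ i ∈ Icc 1 n, B i i * (p (c i) - p2) :=
  modularity_decomposition_general n A m k hAsymm hm hk hksum p p2 c B hB hbar hhbar Q hQ
end

section
/- Let z_{n1} = 0 and z_{nj} = Σ_{i=1}^{j−1} A_{ij} h̄(c_i, c_j) for 2 ≤ j ≤ n, and let F_j = σ(c_1,…,c_j). Then (z_{nj})_{1≤j≤n} is a martingale difference array with respect to (F_j), and Σ_{j=1}^n E[ E( z_{nj}² | F_{j−1} ) ] = m ( p_{(2)} + p_{(2)}² − 2 p_{(3)} ); equivalently, E V_n² = 1, where V_n² = (1/(m² δ_n²)) Σ_{j=1}^n E( z_{nj}² | F_{j−1} ) and δ_n² = ( p_{(2)} + p_{(2)}² − 2 p_{(3)} )/m, provided p_{(2)} + p_{(2)}² − 2 p_{(3)} > 0. -/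
/-!
With the centred indicators `e_k(x) = 1[x = k] - p_k`, one has `h̄(x, y) = ∑_k e_k(x) e_k(y)` on
the support, so `z_j = ∑_k S_{jk} e_k(c_j)` where `S_{jk} = ∑_{i<j} A_{ij} e_k(c_i)` is
`F_{j-1}`-measurable. Since `c_j` is independent of `F_{j-1}` and `E e_k(c_j) = 0`, the
conditional mean of `z_j` vanishes. Independence also factors
`E z_j² = ∑_{k,l} E[S_{jk} S_{jl}] E[e_k(c_j) e_l(c_j)]`; in `E[S_{jk} S_{jl}]` only the diagonal
`i = i'` survives, and both factors are multiples of the covariance `δ_{kl} p_k - p_k p_l`, whose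
squares sum to `p₍₂₎ + p₍₂₎² - 2 p₍₃₎`. Summing `∑_{i<j} A_{ij}` over `j` counts every edge once.
-/

open MeasureTheory ProbabilityTheory Finset

section Algebra

variable {α : Type*} [DecidableEq α]

def centeredIndicator (p : α → ℝ) (k x : α) : ℝ := (if x = k then 1 else 0) - p k

theorem sum_centeredIndicator_mul {s : Finset α} (p : α → ℝ) {x y : α} (hx : x ∈ s)
    (hy : y ∈ s) :
    ∑ k ∈ s, centeredIndicator p k x * centeredIndicator p k y =
      (if x = y then 1 else 0) - p x - p y + ∑ k ∈ s, p k ^ 2 := by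
  have h : ∀ k, centeredIndicator p k x * centeredIndicator p k y =
      (if x = k then (if x = y then 1 else 0) else 0) - (if x = k then p x else 0) -
        (if y = k then p y else 0) + p k ^ 2 := by
    intro k
    unfold centeredIndicator
    split_ifs <;> grind
  simp [h, sum_add_distrib, sum_sub_distrib, hx, hy]

theorem sum_mul_centeredIndicator_mul {s : Finset α} {p : α → ℝ} (hp : ∑ x ∈ s, p x = 1)
    {k l : α} (hk : k ∈ s) (hl : l ∈ s) :
    ∑ x ∈ s, p x * (centeredIndicator p k x * centeredIndicator p l x) =
      (if k = l then p k else 0) - p k * p l := by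
  have h : ∀ x, p x * (centeredIndicator p k x * centeredIndicator p l x) =
      (if k = x then (if k = l then p k else 0) - p k * p l else 0) -
        (if l = x then p k * p l else 0) + p k * p l * p x := by
    intro x
    unfold centeredIndicator
    split_ifs <;> grind
  simp [h, sum_add_distrib, sum_sub_distrib, ← mul_sum, hp, hk, hl]

theorem sum_mul_centeredIndicator {s : Finset α} {p : α → ℝ} (hp : ∑ x ∈ s, p x = 1)
    {k : α} (hk : k ∈ s) : ∑ x ∈ s, p x * centeredIndicator p k x = 0 := by
  simp [centeredIndicator, mul_sub, sum_sub_distrib, ← sum_mul, hp, hk]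

theorem sum_sum_covariance_sq (s : Finset α) (p : α → ℝ) :
    ∑ k ∈ s, ∑ l ∈ s, ((if k = l then p k else 0) - p k * p l) ^ 2 =
      ∑ k ∈ s, p k ^ 2 + (∑ k ∈ s, p k ^ 2) ^ 2 - 2 * ∑ k ∈ s, p k ^ 3 := by
  have h : ∀ k l, ((if k = l then p k else 0) - p k * p l) ^ 2 =
      (if k = l then p k ^ 2 - 2 * p k ^ 3 else 0) + p k ^ 2 * p l ^ 2 := by
    intro k l
    split_ifs <;> grind
  have hdiag : ∀ k ∈ s, ∑ l ∈ s, ((if k = l then p k ^ 2 - 2 * p k ^ 3 else 0) +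
      p k ^ 2 * p l ^ 2) = p k ^ 2 - 2 * p k ^ 3 + p k ^ 2 * ∑ l ∈ s, p l ^ 2 := by
    intro k hk
    simp [sum_add_distrib, hk, mul_sum]
  simp only [h]
  rw [sum_congr rfl hdiag]
  simp only [sum_add_distrib, sum_sub_distrib, ← mul_sum, ← sum_mul]
  ring

end Algebra

section Independence

variable {Ω : Type*} {mF mG m0 : MeasurableSpace Ω} {μ : Measure Ω}

theorem indepFun_of_indep {β γ : Type*} [MeasurableSpace β] [MeasurableSpace γ]
    {f : Ω → β} {g : Ω → γ} (h : Indep mF mG μ)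
    (hf : Measurable[mF] f) (hg : Measurable[mG] g) : IndepFun f g μ :=
  (IndepFun_iff_Indep f g μ).2 (indep_of_indep_of_le h hf.comap_le hg.comap_le)

theorem condExp_mul_of_indep [IsFiniteMeasure μ] (hF : mF ≤ m0) (hG : mG ≤ m0)
    (hind : Indep mF mG μ) {f g : Ω → ℝ} (hf : StronglyMeasurable[mF] f)
    (hg : StronglyMeasurable[mG] g) (hfi : Integrable f μ) (hgi : Integrable g μ) :
    μ[f * g | mF] =ᵐ[μ] fun ω => f ω * ∫ ω', g ω' ∂μ := by
  have hfg : Integrable (f * g) μ :=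
    (indepFun_of_indep hind hf.measurable hg.measurable).integrable_mul hfi hgi
  filter_upwards [condExp_mul_of_stronglyMeasurable_left hf hfg hgi,
    condExp_indep_eq hG hF hg hind.symm] with ω hpull hindep
  rw [hpull, Pi.mul_apply, hindep]

theorem integral_sq_sum_mul_of_indep {ι : Type*} (s : Finset ι) (hind : Indep mF mG μ)
    {S Y : ι → Ω → ℝ} (hSm : ∀ k ∈ s, Measurable[mF] (S k))
    (hYm : ∀ k ∈ s, Measurable[mG] (Y k)) (hS : ∀ k ∈ s, MemLp (S k) 2 μ)
    (hY : ∀ k ∈ s, MemLp (Y k) 2 μ) :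
    ∫ ω, (∑ k ∈ s, S k ω * Y k ω) ^ 2 ∂μ =
      ∑ k ∈ s, ∑ l ∈ s, (∫ ω, S k ω * S l ω ∂μ) * ∫ ω, Y k ω * Y l ω ∂μ := by
  have hindep : ∀ k ∈ s, ∀ l ∈ s, IndepFun (S k * S l) (Y k * Y l) μ := fun k hk l hl =>
    indepFun_of_indep hind ((hSm k hk).mul (hSm l hl)) ((hYm k hk).mul (hYm l hl))
  have hint : ∀ k ∈ s, ∀ l ∈ s, Integrable (fun ω => S k ω * S l ω * (Y k ω * Y l ω)) μ :=
    fun k hk l hl => (hindep k hk l hl).integrable_mul ((hS k hk).integrable_mul (hS l hl))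
      ((hY k hk).integrable_mul (hY l hl))
  calc ∫ ω, (∑ k ∈ s, S k ω * Y k ω) ^ 2 ∂μ
      = ∫ ω, ∑ k ∈ s, ∑ l ∈ s, S k ω * S l ω * (Y k ω * Y l ω) ∂μ := by
        congr 1 with ω
        rw [sq, sum_mul_sum]
        exact sum_congr rfl fun k _ => sum_congr rfl fun l _ => by ring
    _ = ∑ k ∈ s, ∑ l ∈ s, ∫ ω, S k ω * S l ω * (Y k ω * Y l ω) ∂μ := by
        rw [integral_finsetSum _ fun k hk => integrable_finsetSum _ (hint k hk)]
        exact sum_congr rfl fun k hk => integral_finsetSum _ (hint k hk)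
    _ = _ := sum_congr rfl fun k hk => sum_congr rfl fun l hl =>
        (hindep k hk l hl).integral_mul_eq_mul_integral
          ((hS k hk).1.mul (hS l hl).1) ((hY k hk).1.mul (hY l hl).1)

theorem condExp_sum_mul_eq_zero_of_indep [IsFiniteMeasure μ] {ι : Type*} (s : Finset ι)
    (hF : mF ≤ m0) (hG : mG ≤ m0) (hind : Indep mF mG μ) {S Y : ι → Ω → ℝ}
    (hSm : ∀ k ∈ s, StronglyMeasurable[mF] (S k)) (hYm : ∀ k ∈ s, StronglyMeasurable[mG] (Y k))
    (hS : ∀ k ∈ s, Integrable (S k) μ) (hY : ∀ k ∈ s, Integrable (Y k) μ)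
    (hY0 : ∀ k ∈ s, ∫ ω, Y k ω ∂μ = 0) :
    μ[fun ω => ∑ k ∈ s, S k ω * Y k ω | mF] =ᵐ[μ] 0 := by
  have hterm : ∀ k ∈ s, μ[S k * Y k | mF] =ᵐ[μ] 0 := fun k hk => by
    filter_upwards [condExp_mul_of_indep hF hG hind (hSm k hk) (hYm k hk) (hS k hk) (hY k hk)]
      with ω hω
    rw [hω, hY0 k hk, mul_zero, Pi.zero_apply]
  have hint : ∀ k ∈ s, Integrable (S k * Y k) μ := fun k hk =>
    (indepFun_of_indep hind (hSm k hk).measurable (hYm k hk).measurable).integrable_mul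
      (hS k hk) (hY k hk)
  have hfun : (fun ω => ∑ k ∈ s, S k ω * Y k ω) = ∑ k ∈ s, S k * Y k := by
    ext ω
    simp [Finset.sum_apply]
  rw [hfun]
  filter_upwards [condExp_finsetSum hint mF, (Filter.eventually_all_finset s).2 hterm]
    with ω hsum hzero
  rw [hsum, Finset.sum_apply, sum_eq_zero hzero, Pi.zero_apply]

theorem integral_sum_mul_sum_of_indepFun {ι : Type*} (s : Finset ι) (a : ι → ℝ)
    {X Y : ι → Ω → ℝ} (hX : ∀ i ∈ s, MemLp (X i) 2 μ) (hY : ∀ i ∈ s, MemLp (Y i) 2 μ)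
    (hind : ∀ i ∈ s, ∀ j ∈ s, i ≠ j → IndepFun (X i) (Y j) μ)
    (hX0 : ∀ i ∈ s, ∫ ω, X i ω ∂μ = 0) :
    ∫ ω, (∑ i ∈ s, a i * X i ω) * (∑ i ∈ s, a i * Y i ω) ∂μ =
      ∑ i ∈ s, a i ^ 2 * ∫ ω, X i ω * Y i ω ∂μ := by
  classical
  have hint : ∀ i ∈ s, ∀ j ∈ s, Integrable (fun ω => a i * X i ω * (a j * Y j ω)) μ :=
    fun i hi j hj => ((hX i hi).const_mul (a i)).integrable_mul ((hY j hj).const_mul (a j))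
  have hoff : ∀ i ∈ s, ∀ j ∈ s, ∫ ω, a i * X i ω * (a j * Y j ω) ∂μ =
      if i = j then a i ^ 2 * ∫ ω, X i ω * Y i ω ∂μ else 0 := by
    intro i hi j hj
    have hpull :
        ∫ ω, a i * X i ω * (a j * Y j ω) ∂μ = a i * a j * ∫ ω, X i ω * Y j ω ∂μ := by
      rw [← integral_const_mul]
      congr 1 with ω
      ring
    split_ifs with hij
    · rw [hpull, hij, sq]
    · have hprod := (hind i hi j hj hij).integral_mul_eq_mul_integral (hX i hi).1 (hY j hj).1
      simp only [Pi.mul_apply, hX0 i hi, zero_mul] at hprod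
      rw [hpull, hprod, mul_zero]
  simp_rw [sum_mul_sum]
  rw [integral_finsetSum _ fun i hi => integrable_finsetSum _ (hint i hi)]
  refine sum_congr rfl fun i hi => ?_
  rw [integral_finsetSum _ (hint i hi), sum_congr rfl (hoff i hi), sum_ite_eq, if_pos hi]

end Independence

structure HasCategoricalLaw {Ω α : Type*} [MeasurableSpace Ω] [MeasurableSpace α] (c : Ω → α)
    (s : Finset α) (p : α → ℝ) (μ : Measure Ω) : Prop where
  measurable : Measurable c
  mem : ∀ ω, c ω ∈ s
  nonneg : ∀ x ∈ s, 0 ≤ p x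
  measure_eq : ∀ x ∈ s, μ {ω | c ω = x} = ENNReal.ofReal (p x)

namespace HasCategoricalLaw

variable {Ω α : Type*} {m0 : MeasurableSpace Ω} {μ : Measure Ω} [MeasurableSpace α]
  [DiscreteMeasurableSpace α] {c : Ω → α} {s : Finset α} {p : α → ℝ}

theorem integral_comp [IsFiniteMeasure μ] (hc : HasCategoricalLaw c s p μ) (φ : α → ℝ) :
    ∫ ω, φ (c ω) ∂μ = ∑ x ∈ s, p x * φ x := by
  classical
  have hpre : ∀ x, MeasurableSet (c ⁻¹' {x}) := fun x => hc.measurable (.singleton x)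
  have hsplit :
      (fun ω => φ (c ω)) = fun ω => ∑ x ∈ s, (c ⁻¹' {x}).indicator (fun _ => φ x) ω := by
    ext ω
    simp [Set.indicator_apply, hc.mem ω]
  rw [hsplit, integral_finsetSum _ fun x _ => (integrable_const _).indicator (hpre x)]
  refine sum_congr rfl fun x hx => ?_
  rw [integral_indicator_const _ (hpre x), smul_eq_mul, measureReal_def,
    show c ⁻¹' {x} = {ω | c ω = x} from rfl, hc.measure_eq x hx,
    ENNReal.toReal_ofReal (hc.nonneg x hx)]

theorem sum_eq_one [IsProbabilityMeasure μ] (hc : HasCategoricalLaw c s p μ) :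
    ∑ x ∈ s, p x = 1 := by
  simpa using (hc.integral_comp fun _ => 1).symm

theorem memLp_comp [IsFiniteMeasure μ] (hc : HasCategoricalLaw c s p μ) (φ : α → ℝ)
    (q : ENNReal) : MemLp (fun ω => φ (c ω)) q μ :=
  MemLp.of_bound (Measurable.of_discrete.comp hc.measurable).aestronglyMeasurable
    (∑ x ∈ s, |φ x|) (ae_of_all _ fun ω =>
      single_le_sum (f := fun x => |φ x|) (fun _ _ => abs_nonneg _) (hc.mem ω))

variable [DecidableEq α] [IsProbabilityMeasure μ]

theorem integral_centeredIndicator (hc : HasCategoricalLaw c s p μ) {k : α} (hk : k ∈ s) :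
    ∫ ω, centeredIndicator p k (c ω) ∂μ = 0 := by
  rw [hc.integral_comp, sum_mul_centeredIndicator hc.sum_eq_one hk]

theorem integral_centeredIndicator_mul (hc : HasCategoricalLaw c s p μ) {k l : α} (hk : k ∈ s)
    (hl : l ∈ s) :
    ∫ ω, centeredIndicator p k (c ω) * centeredIndicator p l (c ω) ∂μ =
      (if k = l then p k else 0) - p k * p l := by
  rw [hc.integral_comp (fun x => centeredIndicator p k x * centeredIndicator p l x),
    sum_mul_centeredIndicator_mul hc.sum_eq_one hk hl]

end HasCategoricalLaw

theorem ProbabilityTheory.iIndepFun.indep_biSup_comap {Ω ι β : Type*} {m0 : MeasurableSpace Ω}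
    {μ : Measure Ω} [MeasurableSpace β] {c : ι → Ω → β} (hind : iIndepFun c μ)
    (hmeas : ∀ i, Measurable (c i)) {T : Set ι} {j : ι} (hj : j ∉ T) :
    Indep (⨆ i ∈ T, MeasurableSpace.comap (c i) ‹_›) (MeasurableSpace.comap (c j) ‹_›) μ := by
  simpa using indep_iSup_of_disjoint (fun i => (hmeas i).comap_le) hind.iIndep
    (Set.disjoint_singleton_right.2 hj)

section CenteredIncrement

variable {Ω α ι : Type*} [DecidableEq α] {c : ι → Ω → α} {s : Finset α} {p : α → ℝ}

def centeredIncrement (s : Finset α) (p : α → ℝ) (c : ι → Ω → α) (a : ι → ℝ) (T : Finset ι)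
    (j : ι) (ω : Ω) : ℝ :=
  ∑ k ∈ s, (∑ i ∈ T, a i * centeredIndicator p k (c i ω)) * centeredIndicator p k (c j ω)

theorem centeredIncrement_eq (hmem : ∀ i ω, c i ω ∈ s) (a : ι → ℝ) (T : Finset ι) (j : ι)
    (ω : Ω) :
    centeredIncrement s p c a T j ω = ∑ i ∈ T, a i *
      ((if c i ω = c j ω then 1 else 0) - p (c i ω) - p (c j ω) + ∑ k ∈ s, p k ^ 2) := by
  simp only [centeredIncrement, sum_mul, mul_assoc]
  rw [sum_comm]
  simp only [← mul_sum, sum_centeredIndicator_mul p (hmem _ ω) (hmem j ω)]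

variable [MeasurableSpace α] [DiscreteMeasurableSpace α]

theorem measurable_sum_mul_centeredIndicator (a : ι → ℝ) (T : Finset ι) (k : α) :
    Measurable[⨆ i ∈ T, MeasurableSpace.comap (c i) ‹_›]
      (fun ω => ∑ i ∈ T, a i * centeredIndicator p k (c i ω)) :=
  Finset.measurable_sum T fun i hi => measurable_const.mul
    ((Measurable.of_discrete (f := centeredIndicator p k)).comp
      (measurable_iff_comap_le.2 (le_biSup (fun i => MeasurableSpace.comap (c i) ‹_›) hi)))

variable {m0 : MeasurableSpace Ω} {μ : Measure Ω} [IsProbabilityMeasure μ]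

theorem memLp_sum_mul_centeredIndicator (hc : ∀ i, HasCategoricalLaw (c i) s p μ) (a : ι → ℝ)
    (T : Finset ι) (k : α) (q : ENNReal) :
    MemLp (fun ω => ∑ i ∈ T, a i * centeredIndicator p k (c i ω)) q μ :=
  memLp_finsetSum T fun i _ => ((hc i).memLp_comp _ q).const_mul (a i)

theorem integrable_centeredIncrement (hc : ∀ i, HasCategoricalLaw (c i) s p μ) (a : ι → ℝ)
    (T : Finset ι) (j : ι) : Integrable (centeredIncrement s p c a T j) μ :=
  integrable_finsetSum s fun k _ => (memLp_sum_mul_centeredIndicator hc a T k 2).integrable_mul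
    ((hc j).memLp_comp (centeredIndicator p k) 2)

theorem condExp_centeredIncrement_ae_eq_zero (hc : ∀ i, HasCategoricalLaw (c i) s p μ)
    (hind : iIndepFun c μ) (a : ι → ℝ) {T : Finset ι} {j : ι} (hj : j ∉ T) :
    μ[centeredIncrement s p c a T j | ⨆ i ∈ T, MeasurableSpace.comap (c i) ‹_›] =ᵐ[μ] 0 :=
  condExp_sum_mul_eq_zero_of_indep s (iSup₂_le fun i _ => (hc i).measurable.comap_le)
    (hc j).measurable.comap_le (hind.indep_biSup_comap (fun i => (hc i).measurable) (by simpa))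
    (fun k _ => (measurable_sum_mul_centeredIndicator a T k).stronglyMeasurable)
    (fun k _ => ((Measurable.of_discrete (f := centeredIndicator p k)).comp
      (comap_measurable (c j))).stronglyMeasurable)
    (fun k _ => (memLp_sum_mul_centeredIndicator hc a T k 1).integrable le_rfl)
    (fun k _ => ((hc j).memLp_comp _ 1).integrable le_rfl)
    (fun k hk => (hc j).integral_centeredIndicator hk)

theorem integral_centeredIncrement_sq (hc : ∀ i, HasCategoricalLaw (c i) s p μ)
    (hind : iIndepFun c μ) (a : ι → ℝ) {T : Finset ι} {j : ι} (hj : j ∉ T) :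
    ∫ ω, centeredIncrement s p c a T j ω ^ 2 ∂μ = (∑ i ∈ T, a i ^ 2) *
      (∑ k ∈ s, p k ^ 2 + (∑ k ∈ s, p k ^ 2) ^ 2 - 2 * ∑ k ∈ s, p k ^ 3) := by
  have hSS : ∀ k ∈ s, ∀ l ∈ s, ∫ ω, (∑ i ∈ T, a i * centeredIndicator p k (c i ω)) *
      (∑ i ∈ T, a i * centeredIndicator p l (c i ω)) ∂μ =
        (∑ i ∈ T, a i ^ 2) * ((if k = l then p k else 0) - p k * p l) := by
    intro k hk l hl
    rw [integral_sum_mul_sum_of_indepFun T a (fun i _ => (hc i).memLp_comp _ 2)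
      (fun i _ => (hc i).memLp_comp _ 2)
      (fun i _ i' _ hii' => (hind.indepFun hii').comp .of_discrete .of_discrete)
      (fun i _ => (hc i).integral_centeredIndicator hk), sum_mul]
    exact sum_congr rfl fun i _ => by rw [(hc i).integral_centeredIndicator_mul hk hl]
  unfold centeredIncrement
  rw [integral_sq_sum_mul_of_indep s
    (S := fun k ω => ∑ i ∈ T, a i * centeredIndicator p k (c i ω))
    (Y := fun k ω => centeredIndicator p k (c j ω))
    (hind.indep_biSup_comap (fun i => (hc i).measurable) (by simpa))
    (fun k _ => measurable_sum_mul_centeredIndicator a T k)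
    (fun k _ => (Measurable.of_discrete (f := centeredIndicator p k)).comp
      (comap_measurable (c j)))
    (fun k _ => memLp_sum_mul_centeredIndicator hc a T k 2) (fun k _ => (hc j).memLp_comp _ 2),
    ← sum_sum_covariance_sq, mul_sum]
  refine sum_congr rfl fun k hk => ?_
  rw [mul_sum]
  refine sum_congr rfl fun l hl => ?_
  rw [hSS k hk l hl, (hc j).integral_centeredIndicator_mul hk hl]
  ring

end CenteredIncrement

theorem two_mul_sum_Icc_sum_Icc_pred (n : ℕ) {A : ℕ → ℕ → ℝ}
    (hsymm : ∀ i ∈ Icc 1 n, ∀ j ∈ Icc 1 n, A i j = A j i) (hdiag : ∀ i ∈ Icc 1 n, A i i = 0) :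
    2 * ∑ j ∈ Icc 1 n, ∑ i ∈ Icc 1 (j - 1), A i j = ∑ i ∈ Icc 1 n, ∑ j ∈ Icc 1 n, A i j := by
  induction n with
  | zero => simp
  | succ n ih =>
    have hsub : Icc 1 n ⊆ Icc 1 (n + 1) := Icc_subset_Icc le_rfl n.le_succ
    have hrow : ∑ j ∈ Icc 1 n, A (n + 1) j = ∑ i ∈ Icc 1 n, A i (n + 1) :=
      sum_congr rfl fun j hj => hsymm _ (by simp) _ (hsub hj)
    rw [sum_Icc_succ_top (Nat.le_add_left 1 n), sum_Icc_succ_top (Nat.le_add_left 1 n),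
      Nat.add_sub_cancel, mul_add,
      ih (fun i hi j hj => hsymm i (hsub hi) j (hsub hj)) fun i hi => hdiag i (hsub hi)]
    simp only [sum_Icc_succ_top (Nat.le_add_left 1 n), sum_add_distrib, hdiag (n + 1) (by simp),
      hrow]
    ring

theorem martingale_difference_and_mean_one_general
    {Ω : Type*} [MeasureSpace Ω] [IsProbabilityMeasure (ℙ : Measure Ω)]
    (n : ℕ) (A : ℕ → ℕ → ℝ) (m : ℕ) (k : ℕ → ℝ)
    (hA01 : ∀ i ∈ Icc 1 n, ∀ j ∈ Icc 1 n, A i j = 0 ∨ A i j = 1)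
    (hAsymm : ∀ i ∈ Icc 1 n, ∀ j ∈ Icc 1 n, A i j = A j i)
    (hAdiag : ∀ i ∈ Icc 1 n, A i i = 0)
    (hm : 1 ≤ m)
    (hk : ∀ i ∈ Icc 1 n, k i = ∑ j ∈ Icc 1 n, A i j)
    (hksum : ∑ i ∈ Icc 1 n, k i = 2 * (m : ℝ))
    (K : ℕ) (p : ℕ → ℝ)
    (hp0 : ∀ j ∈ Icc 1 K, 0 ≤ p j)
    (p2 p3 : ℝ)
    (hp2 : p2 = ∑ j ∈ Icc 1 K, (p j) ^ 2) (hp3 : p3 = ∑ j ∈ Icc 1 K, (p j) ^ 3)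
    (hpos : 0 < p2 + p2 ^ 2 - 2 * p3)
    (c : ℕ → Ω → ℕ)
    (hcmeas : ∀ i, Measurable (c i))
    (hcrange : ∀ i ω, c i ω ∈ Icc 1 K)
    (hcindep : iIndepFun c ℙ)
    (hcdist : ∀ i, ∀ j ∈ Icc 1 K, (ℙ {ω | c i ω = j}) = ENNReal.ofReal (p j))
    (hbar : ℕ → ℕ → ℝ)
    (hhbar : ∀ x y, hbar x y = (if x = y then (1 : ℝ) else 0) - p x - p y + p2)
    -- the martingale increments
    (z : ℕ → Ω → ℝ)
    (hz : ∀ j ω, z j ω = ∑ i ∈ Icc 1 (j - 1), A i j * hbar (c i ω) (c j ω))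
    -- the natural filtration `F_j = σ(c_1, …, c_j)`
    (F : ℕ → MeasurableSpace Ω)
    (hF : ∀ j, F j = ⨆ i ∈ Icc 1 j, MeasurableSpace.comap (c i) inferInstance)
    -- the normalized conditional variance process
    (δsq : ℝ) (hδsq : δsq = (p2 + p2 ^ 2 - 2 * p3) / (m : ℝ))
    (V : Ω → ℝ)
    (hV : ∀ ω, V ω = (1 / ((m : ℝ) ^ 2 * δsq)) *
      ∑ j ∈ Icc 1 n, (ℙ[(fun ω' => (z j ω') ^ 2) | F (j - 1)]) ω) :
    (∀ j ∈ Icc 1 n, Integrable (z j) ℙ ∧ ℙ[z j | F (j - 1)] =ᵐ[ℙ] 0)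
    ∧ (∑ j ∈ Icc 1 n, ∫ ω, (ℙ[(fun ω' => (z j ω') ^ 2) | F (j - 1)]) ω ∂ℙ
        = (m : ℝ) * (p2 + p2 ^ 2 - 2 * p3))
    ∧ ∫ ω, V ω ∂ℙ = 1 := by
  have hlaw : ∀ i, HasCategoricalLaw (c i) (Icc 1 K) p ℙ :=
    fun i => ⟨hcmeas i, hcrange i, hp0, hcdist i⟩
  have hzc : ∀ j, z j = centeredIncrement (Icc 1 K) p c (fun i => A i j) (Icc 1 (j - 1)) j :=
    fun j => funext fun ω => by rw [hz, centeredIncrement_eq hcrange, ← hp2]; simp only [hhbar]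
  have hpast : ∀ j ∈ Icc 1 n, j ∉ Icc 1 (j - 1) := fun j hj => by
    simp only [mem_Icc] at hj ⊢
    omega
  have hsq : ∀ j ∈ Icc 1 n,
      ∫ ω, z j ω ^ 2 = (∑ i ∈ Icc 1 (j - 1), A i j) * (p2 + p2 ^ 2 - 2 * p3) := by
    intro j hj
    rw [hzc, integral_centeredIncrement_sq hlaw hcindep _ (hpast j hj), ← hp2, ← hp3]
    refine congrArg (· * _) (sum_congr rfl fun i hi => ?_)
    have hi' : i ∈ Icc 1 n := by simp only [mem_Icc] at hi hj ⊢; omega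
    rcases hA01 i hi' j hj with h | h <;> simp [h]
  have hedges : ∑ j ∈ Icc 1 n, ∑ i ∈ Icc 1 (j - 1), A i j = m := by
    have := two_mul_sum_Icc_sum_Icc_pred n hAsymm hAdiag
    rw [← sum_congr rfl hk, hksum] at this
    linarith
  have hvar : ∑ j ∈ Icc 1 n, ∫ ω, (ℙ[(fun ω' => (z j ω') ^ 2) | F (j - 1)]) ω ∂ℙ
      = (m : ℝ) * (p2 + p2 ^ 2 - 2 * p3) := by
    have hFle : ∀ j, F j ≤ MeasureSpace.toMeasurableSpace :=
      fun j => hF j ▸ iSup₂_le fun i _ => (hcmeas i).comap_le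
    rw [sum_congr rfl fun j hj => (integral_condExp (hFle _)).trans (hsq j hj), ← sum_mul, hedges]
  refine ⟨fun j hj => ⟨hzc j ▸ integrable_centeredIncrement hlaw _ _ _, ?_⟩, hvar, ?_⟩
  · rw [hF, hzc]
    exact condExp_centeredIncrement_ae_eq_zero hlaw hcindep _ (hpast j hj)
  · simp_rw [hV]
    rw [integral_const_mul, integral_finsetSum _ fun j _ => integrable_condExp, hvar, hδsq]
    generalize p2 + p2 ^ 2 - 2 * p3 = C at hpos ⊢
    have hm0 : (m : ℝ) ≠ 0 := Nat.cast_ne_zero.2 (by omega)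
    field_simp [hpos.ne']

/-- The increments `z_{nj}` form a martingale difference array and the conditional
variance process has unit mean. -/
theorem martingale_difference_and_mean_one
    {Ω : Type*} [MeasureSpace Ω] [IsProbabilityMeasure (ℙ : Measure Ω)]
    (n : ℕ) (A : ℕ → ℕ → ℝ) (m : ℕ) (k : ℕ → ℝ)
    (hA01 : ∀ i ∈ Icc 1 n, ∀ j ∈ Icc 1 n, A i j = 0 ∨ A i j = 1)
    (hAsymm : ∀ i ∈ Icc 1 n, ∀ j ∈ Icc 1 n, A i j = A j i)
    (hAdiag : ∀ i ∈ Icc 1 n, A i i = 0)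
    (hm : 1 ≤ m)
    (hk : ∀ i ∈ Icc 1 n, k i = ∑ j ∈ Icc 1 n, A i j)
    (hksum : ∑ i ∈ Icc 1 n, k i = 2 * (m : ℝ))
    (K : ℕ) (hK : 1 ≤ K) (p : ℕ → ℝ)
    (hp0 : ∀ j ∈ Icc 1 K, 0 ≤ p j) (hp1 : ∑ j ∈ Icc 1 K, p j = 1)
    (p2 p3 : ℝ)
    (hp2 : p2 = ∑ j ∈ Icc 1 K, (p j) ^ 2) (hp3 : p3 = ∑ j ∈ Icc 1 K, (p j) ^ 3)
    (hpos : 0 < p2 + p2 ^ 2 - 2 * p3)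
    (c : ℕ → Ω → ℕ)
    (hcmeas : ∀ i, Measurable (c i))
    (hcrange : ∀ i ω, c i ω ∈ Icc 1 K)
    (hcindep : iIndepFun c ℙ)
    (hcdist : ∀ i, ∀ j ∈ Icc 1 K, (ℙ {ω | c i ω = j}) = ENNReal.ofReal (p j))
    (hbar : ℕ → ℕ → ℝ)
    (hhbar : ∀ x y, hbar x y = (if x = y then (1 : ℝ) else 0) - p x - p y + p2)
    -- the martingale increments
    (z : ℕ → Ω → ℝ)
    (hz : ∀ j ω, z j ω = ∑ i ∈ Icc 1 (j - 1), A i j * hbar (c i ω) (c j ω))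
    -- the natural filtration `F_j = σ(c_1, …, c_j)`
    (F : ℕ → MeasurableSpace Ω)
    (hF : ∀ j, F j = ⨆ i ∈ Icc 1 j, MeasurableSpace.comap (c i) inferInstance)
    -- the normalized conditional variance process
    (δsq : ℝ) (hδsq : δsq = (p2 + p2 ^ 2 - 2 * p3) / (m : ℝ))
    (V : Ω → ℝ)
    (hV : ∀ ω, V ω = (1 / ((m : ℝ) ^ 2 * δsq)) *
      ∑ j ∈ Icc 1 n, (ℙ[(fun ω' => (z j ω') ^ 2) | F (j - 1)]) ω) :
    (∀ j ∈ Icc 1 n, Integrable (z j) ℙ ∧ ℙ[z j | F (j - 1)] =ᵐ[ℙ] 0)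
    ∧ (∑ j ∈ Icc 1 n, ∫ ω, (ℙ[(fun ω' => (z j ω') ^ 2) | F (j - 1)]) ω ∂ℙ
        = (m : ℝ) * (p2 + p2 ^ 2 - 2 * p3))
    ∧ ∫ ω, V ω ∂ℙ = 1 :=
  martingale_difference_and_mean_one_general n A m k hA01 hAsymm hAdiag hm hk hksum K p hp0 p2 p3
    hp2 hp3 hpos c hcmeas hcrange hcindep hcdist hbar hhbar z hz F hF δsq hδsq V hV
end

section
/- If max_{1≤i≤n} k_i / √m → 0 as n → ∞, then (1/(2m)) Σ_{1≤i≠j≤n} B_{ij}² → 1 and (1/m) Σ_{i=1}^n B_{ii}² → 0 as n → ∞. -/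
/-!
Write `x_ij = k_i k_j / (2m)`. For a 0/1 entry `a` one has `(a - x)² = a - 2ax + x²`, so the
off-diagonal sum of `B_ij²` is `2m - 2 Σ A_ij x_ij + Σ_{i ≠ j} x_ij²`. If every `k_i² ≤ δ m`, then
`k_i k_j ≤ δ m`, hence `x_ij ≤ δ / 2` and `x_ij² ≤ (δ / (4m)) k_i k_j`; summing against
`Σ_{ij} A_ij = Σ_{ij} k_i k_j / (2m) = 2m` bounds both correction terms by `δ m`. The diagonal
entries are `B_ii = -x_ii`, so their squares are controlled by the same bound on `Σ x_ij²`.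
-/

open Finset Real

lemma mul_le_of_sq_le_of_sq_le {a b c : ℝ} (ha : a ^ 2 ≤ c) (hb : b ^ 2 ≤ c) : a * b ≤ c := by
  nlinarith [two_mul_le_add_sq a b]

lemma sq_sub_eq_of_eq_zero_or_eq_one {a : ℝ} (x : ℝ) (ha : a = 0 ∨ a = 1) :
    (a - x) ^ 2 = a - 2 * a * x + x ^ 2 := by
  rcases ha with rfl | rfl <;> ring

lemma sq_le_mul_of_div_sqrt_le_sqrt {x m δ : ℝ} (hx : 0 ≤ x) (hm : 0 < m) (hδ : 0 ≤ δ)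
    (h : x / √m ≤ √δ) : x ^ 2 ≤ δ * m := by
  rw [div_le_iff₀ (sqrt_pos.2 hm), ← sqrt_mul hδ] at h
  exact (le_sqrt hx (by positivity)).1 h

section Modularity

variable {ι : Type*} {s : Finset ι} {A : ι → ι → ℝ} {k : ι → ℝ} {m δ : ℝ}

lemma degree_nonneg (hA : ∀ i ∈ s, ∀ j ∈ s, A i j = 0 ∨ A i j = 1)
    (hk : ∀ i ∈ s, k i = ∑ j ∈ s, A i j) : ∀ i ∈ s, 0 ≤ k i := fun i hi => by
  rw [hk i hi]
  exact sum_nonneg fun j hj => by rcases hA i hi j hj with h | h <;> simp [h]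

lemma sum_sum_sq_div_le (hm : 0 < m) (hk0 : ∀ i ∈ s, 0 ≤ k i)
    (hksum : ∑ i ∈ s, k i = 2 * m) (hkδ : ∀ i ∈ s, k i ^ 2 ≤ δ * m) :
    ∑ i ∈ s, ∑ j ∈ s, (k i * k j / (2 * m)) ^ 2 ≤ δ * m := by
  have hterm : ∀ i ∈ s, ∀ j ∈ s, (k i * k j / (2 * m)) ^ 2 ≤ δ / (4 * m) * (k i * k j) := by
    intro i hi j hj
    have hkk := mul_le_of_sq_le_of_sq_le (hkδ i hi) (hkδ j hj)
    have hkk0 := mul_nonneg (hk0 i hi) (hk0 j hj)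
    rw [div_pow, mul_pow, div_mul_eq_mul_div, div_le_div_iff₀ (by positivity) (by positivity)]
    nlinarith [mul_le_mul_of_nonneg_left hkk hkk0]
  calc ∑ i ∈ s, ∑ j ∈ s, (k i * k j / (2 * m)) ^ 2
      ≤ ∑ i ∈ s, ∑ j ∈ s, δ / (4 * m) * (k i * k j) :=
        sum_le_sum fun i hi => sum_le_sum fun j hj => hterm i hi j hj
    _ = δ / (4 * m) * (∑ i ∈ s, k i) ^ 2 := by rw [sq, sum_mul_sum, mul_sum]; simp only [mul_sum]
    _ = δ * m := by rw [hksum]; field_simp; ring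

lemma abs_offDiag_sum_sq_div_sub_one_le [DecidableEq ι] (hm : 0 < m)
    (hA : ∀ i ∈ s, ∀ j ∈ s, A i j = 0 ∨ A i j = 1) (hAdiag : ∀ i ∈ s, A i i = 0)
    (hk : ∀ i ∈ s, k i = ∑ j ∈ s, A i j) (hksum : ∑ i ∈ s, k i = 2 * m)
    (hkδ : ∀ i ∈ s, k i ^ 2 ≤ δ * m) :
    |1 / (2 * m) * ∑ i ∈ s, ∑ j ∈ s,
        (if i ≠ j then (A i j - k i * k j / (2 * m)) ^ 2 else 0) - 1| ≤ δ := by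
  set x : ι → ι → ℝ := fun i j => k i * k j / (2 * m)
  set S := ∑ i ∈ s, ∑ j ∈ s, (if i ≠ j then (A i j - x i j) ^ 2 else 0)
  have hk0 := degree_nonneg hA hk
  have hA0 : ∀ i ∈ s, ∀ j ∈ s, 0 ≤ A i j := fun i hi j hj => by
    rcases hA i hi j hj with h | h <;> simp [h]
  have hx0 : ∀ i ∈ s, ∀ j ∈ s, 0 ≤ x i j := fun i hi j hj => by
    have := hk0 i hi; have := hk0 j hj; positivity
  have hAsum : ∑ i ∈ s, ∑ j ∈ s, A i j = 2 * m := by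
    rw [← hksum]; exact sum_congr rfl fun i hi => (hk i hi).symm
  have hcross : ∑ i ∈ s, ∑ j ∈ s, A i j * x i j ≤ δ * m :=
    calc ∑ i ∈ s, ∑ j ∈ s, A i j * x i j ≤ ∑ i ∈ s, ∑ j ∈ s, A i j * (δ / 2) := by
          refine sum_le_sum fun i hi => sum_le_sum fun j hj => ?_
          refine mul_le_mul_of_nonneg_left ?_ (hA0 i hi j hj)
          rw [div_le_div_iff₀ (by positivity) two_pos]
          nlinarith [mul_le_of_sq_le_of_sq_le (hkδ i hi) (hkδ j hj)]
      _ = δ * m := by simp only [← sum_mul, hAsum]; ring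
  have hsq := sum_sum_sq_div_le hm hk0 hksum hkδ
  have hlower : ∑ i ∈ s, ∑ j ∈ s, (A i j - 2 * (A i j * x i j)) ≤ S := by
    refine sum_le_sum fun i hi => sum_le_sum fun j hj => ?_
    split_ifs with hij
    · nlinarith [sq_sub_eq_of_eq_zero_or_eq_one (x i j) (hA i hi j hj)]
    · simp [not_not.1 hij, hAdiag j hj]
  have hupper : S ≤ ∑ i ∈ s, ∑ j ∈ s, (A i j + x i j ^ 2) := by
    refine sum_le_sum fun i hi => sum_le_sum fun j hj => ?_
    split_ifs with hij
    · nlinarith [sq_sub_eq_of_eq_zero_or_eq_one (x i j) (hA i hi j hj),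
        mul_nonneg (hA0 i hi j hj) (hx0 i hi j hj)]
    · simp [not_not.1 hij, hAdiag j hj, sq_nonneg]
  simp only [sum_add_distrib, sum_sub_distrib, ← mul_sum, hAsum] at hlower hupper
  rw [abs_le, one_div, ← div_eq_inv_mul, le_sub_iff_add_le, sub_le_iff_le_add,
    le_div_iff₀ (by positivity), div_le_iff₀ (by positivity)]
  constructor <;> nlinarith

lemma diag_sum_sq_div_le (hm : 0 < m) (hA : ∀ i ∈ s, ∀ j ∈ s, A i j = 0 ∨ A i j = 1)
    (hAdiag : ∀ i ∈ s, A i i = 0) (hk : ∀ i ∈ s, k i = ∑ j ∈ s, A i j)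
    (hksum : ∑ i ∈ s, k i = 2 * m) (hkδ : ∀ i ∈ s, k i ^ 2 ≤ δ * m) :
    1 / m * ∑ i ∈ s, (A i i - k i * k i / (2 * m)) ^ 2 ≤ δ := by
  have hdiag : ∑ i ∈ s, (A i i - k i * k i / (2 * m)) ^ 2
      ≤ ∑ i ∈ s, ∑ j ∈ s, (k i * k j / (2 * m)) ^ 2 :=
    sum_le_sum fun i hi => by
      rw [hAdiag i hi, zero_sub, neg_sq]
      exact single_le_sum (f := fun j => (k i * k j / (2 * m)) ^ 2)
        (fun j _ => sq_nonneg _) hi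
  have hsq := sum_sum_sq_div_le hm (degree_nonneg hA hk) hksum hkδ
  rw [one_div, ← div_eq_inv_mul, div_le_iff₀ hm]
  linarith

end Modularity

theorem B_squared_sums_limits_general
    (A : ℕ → ℕ → ℕ → ℝ) (m : ℕ → ℕ) (k : ℕ → ℕ → ℝ)
    (hA01 : ∀ n ≥ 2, ∀ i ∈ Icc 1 n, ∀ j ∈ Icc 1 n, A n i j = 0 ∨ A n i j = 1)
    (hAdiag : ∀ n ≥ 2, ∀ i ∈ Icc 1 n, A n i i = 0)
    (hm : ∀ n ≥ 2, 1 ≤ m n)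
    (hk : ∀ n ≥ 2, ∀ i ∈ Icc 1 n, k n i = ∑ j ∈ Icc 1 n, A n i j)
    (hksum : ∀ n ≥ 2, ∑ i ∈ Icc 1 n, k n i = 2 * (m n : ℝ))
    (B : ℕ → ℕ → ℕ → ℝ)
    (hB : ∀ n i j, B n i j = A n i j - k n i * k n j / (2 * (m n : ℝ)))
    -- `max_{1 ≤ i ≤ n} k_i / √m → 0`
    (hmax : ∀ ε > (0 : ℝ), ∀ᶠ n in Filter.atTop,
      ∀ i ∈ Icc 1 n, k n i / Real.sqrt (m n) ≤ ε) :
    Filter.Tendsto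
        (fun n => (1 / (2 * (m n : ℝ))) *
          ∑ i ∈ Icc 1 n, ∑ j ∈ Icc 1 n, if i ≠ j then (B n i j) ^ 2 else 0)
        Filter.atTop (nhds 1)
      ∧ Filter.Tendsto
        (fun n => (1 / (m n : ℝ)) * ∑ i ∈ Icc 1 n, (B n i i) ^ 2)
        Filter.atTop (nhds 0) := by
  have hmpos : ∀ n ≥ 2, (0 : ℝ) < m n := fun n hn => by exact_mod_cast hm n hn
  have hsmall : ∀ δ > (0 : ℝ), ∀ᶠ n in Filter.atTop,
      2 ≤ n ∧ ∀ i ∈ Icc 1 n, k n i ^ 2 ≤ δ * m n := fun δ hδ => by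
    filter_upwards [hmax √δ (sqrt_pos.2 hδ), Filter.eventually_ge_atTop 2] with n hn h2
    exact ⟨h2, fun i hi => sq_le_mul_of_div_sqrt_le_sqrt
      (degree_nonneg (hA01 n h2) (hk n h2) i hi) (hmpos n h2) hδ.le (hn i hi)⟩
  simp only [hB]
  constructor
  · refine Metric.nhds_basis_closedBall.tendsto_right_iff.2 fun δ hδ => ?_
    filter_upwards [hsmall δ hδ] with n ⟨h2, hkδ⟩
    rw [Metric.mem_closedBall, dist_eq]
    exact abs_offDiag_sum_sq_div_sub_one_le (hmpos n h2) (hA01 n h2) (hAdiag n h2) (hk n h2)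
      (hksum n h2) hkδ
  · refine Metric.nhds_basis_closedBall.tendsto_right_iff.2 fun δ hδ => ?_
    filter_upwards [hsmall δ hδ] with n ⟨h2, hkδ⟩
    rw [Metric.mem_closedBall, dist_zero_right, norm_of_nonneg (by positivity)]
    exact diag_sum_sq_div_le (hmpos n h2) (hA01 n h2) (hAdiag n h2) (hk n h2) (hksum n h2) hkδ

/-- Limits of the normalized sums of `B_{ij}²` (equation (4.13) of the paper). -/
theorem B_squared_sums_limits
    (A : ℕ → ℕ → ℕ → ℝ) (m : ℕ → ℕ) (k : ℕ → ℕ → ℝ)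
    (hA01 : ∀ n ≥ 2, ∀ i ∈ Icc 1 n, ∀ j ∈ Icc 1 n, A n i j = 0 ∨ A n i j = 1)
    (hAsymm : ∀ n ≥ 2, ∀ i ∈ Icc 1 n, ∀ j ∈ Icc 1 n, A n i j = A n j i)
    (hAdiag : ∀ n ≥ 2, ∀ i ∈ Icc 1 n, A n i i = 0)
    (hm : ∀ n ≥ 2, 1 ≤ m n)
    (hk : ∀ n ≥ 2, ∀ i ∈ Icc 1 n, k n i = ∑ j ∈ Icc 1 n, A n i j)
    (hksum : ∀ n ≥ 2, ∑ i ∈ Icc 1 n, k n i = 2 * (m n : ℝ))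
    (B : ℕ → ℕ → ℕ → ℝ)
    (hB : ∀ n i j, B n i j = A n i j - k n i * k n j / (2 * (m n : ℝ)))
    -- `max_{1 ≤ i ≤ n} k_i / √m → 0`
    (hmax : ∀ ε > (0 : ℝ), ∀ᶠ n in Filter.atTop,
      ∀ i ∈ Icc 1 n, k n i / Real.sqrt (m n) ≤ ε) :
    Filter.Tendsto
        (fun n => (1 / (2 * (m n : ℝ))) *
          ∑ i ∈ Icc 1 n, ∑ j ∈ Icc 1 n, if i ≠ j then (B n i j) ^ 2 else 0)
        Filter.atTop (nhds 1)
      ∧ Filter.Tendsto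
        (fun n => (1 / (m n : ℝ)) * ∑ i ∈ Icc 1 n, (B n i i) ^ 2)
        Filter.atTop (nhds 0) :=
  B_squared_sums_limits_general A m k hA01 hAdiag hm hk hksum B hB hmax
end

section
/- The modularity Q_n has mean E[Q_n] = −((1 − p_{(2)})/(4m²)) Σ_{i=1}^n k_i² and variance Var(Q_n) = ((p_{(2)} + p_{(2)}² − 2p_{(3)})/(2m²)) Σ_{1≤i≠j≤n} B_{ij}² + ((p_{(3)} − p_{(2)}²)/m²) Σ_{i=1}^n B_{ii}². -/
/-!
Since every row and column of `B` sums to zero, `δ_{c_i c_j}` may be replaced in `Q` by the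
centered kernel `φ(x, y) = δ_{xy} - p_x - p_y + p_(2)`, which integrates to zero against `p` in
either argument. Hence, by independence of the labels, `cov(φ(c_i, c_j), φ(c_a, c_b))` vanishes
when one of `i, j, a, b` occurs only once, and also when `i = j ≠ a = b`: it vanishes unless
`{a, b} = {i, j}` as multisets. The surviving covariances are `Var φ(c, c) = 4 (p_(3) - p_(2)²)`
and, for `i ≠ j`, `Var φ(c_i, c_j) = p_(2) + p_(2)² - 2 p_(3)`; the mean is `(1 - p_(2)) Σ_i B_ii`.
-/

open MeasureTheory ProbabilityTheory Finset

def powerSum (K : ℕ) (p : ℕ → ℝ) (l : ℕ) : ℝ := ∑ u ∈ Icc 1 K, p u ^ l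

/-- For `x, y ∈ [1, K]` this is `Σ_u (δ_{xu} - p_u) (δ_{yu} - p_u)`: the Gram kernel of the
centered one-hot encodings of the labels. -/
def centeredKernel (K : ℕ) (p : ℕ → ℝ) (x y : ℕ) : ℝ :=
  (if x = y then 1 else 0) - p x - p y + powerSum K p 2

section Kernel

variable {K : ℕ} {p : ℕ → ℝ}

lemma centeredKernel_comm (x y : ℕ) : centeredKernel K p x y = centeredKernel K p y x := by
  unfold centeredKernel
  rw [if_congr eq_comm rfl rfl]
  ring

lemma sum_mul_centeredKernel_left (hp : ∑ u ∈ Icc 1 K, p u = 1) {y : ℕ} (hy : y ∈ Icc 1 K) :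
    ∑ x ∈ Icc 1 K, p x * centeredKernel K p x y = 0 := by
  simp only [centeredKernel, mul_add, mul_sub, mul_ite, mul_one, mul_zero, ← pow_two,
    sum_add_distrib, sum_sub_distrib, sum_ite_eq', hy, if_true, ← sum_mul, hp, powerSum]
  ring

lemma sum_mul_centeredKernel_self (hp : ∑ u ∈ Icc 1 K, p u = 1) :
    ∑ x ∈ Icc 1 K, p x * centeredKernel K p x x = 1 - powerSum K p 2 := by
  simp only [centeredKernel, if_true, mul_add, mul_sub, mul_one, ← pow_two, sum_add_distrib,
    sum_sub_distrib, ← sum_mul, hp, powerSum]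
  ring

lemma sum_mul_centeredKernel_self_sq (hp : ∑ u ∈ Icc 1 K, p u = 1) :
    ∑ x ∈ Icc 1 K, p x * centeredKernel K p x x ^ 2 - (1 - powerSum K p 2) ^ 2
      = 4 * (powerSum K p 3 - powerSum K p 2 ^ 2) := by
  have h : ∀ x, p x * centeredKernel K p x x ^ 2
      = (1 + powerSum K p 2) ^ 2 * p x - 4 * (1 + powerSum K p 2) * p x ^ 2 + 4 * p x ^ 3 := by
    intro x; simp only [centeredKernel, if_true]; ring
  simp only [h, sum_add_distrib, sum_sub_distrib, ← mul_sum, hp]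
  simp only [powerSum]
  ring

lemma sum_mul_sum_mul_centeredKernel_sq (hp : ∑ u ∈ Icc 1 K, p u = 1) :
    ∑ y ∈ Icc 1 K, p y * ∑ x ∈ Icc 1 K, p x * centeredKernel K p x y ^ 2
      = powerSum K p 2 + powerSum K p 2 ^ 2 - 2 * powerSum K p 3 := by
  set s := powerSum K p 2 with hs
  set t := powerSum K p 3 with ht
  -- `centeredKernel x y ^ 2 = δ_{xy} (1 - 2 r) + r ^ 2` with `r = p x + p y - s`
  have inner : ∀ y ∈ Icc 1 K, ∑ x ∈ Icc 1 K, p x * centeredKernel K p x y ^ 2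
      = p y * (1 - 4 * p y + 2 * s) + t + 2 * (p y - s) * s + (p y - s) ^ 2 := by
    intro y hy
    have h : ∀ x, p x * centeredKernel K p x y ^ 2
        = (if x = y then p y * (1 - 4 * p y + 2 * s) else 0)
          + (p x ^ 3 + 2 * (p y - s) * p x ^ 2 + (p y - s) ^ 2 * p x) := by
      intro x
      simp only [centeredKernel, ← hs]
      split_ifs with hxy
      · subst hxy; ring
      · ring
    simp only [h, sum_add_distrib, sum_ite_eq', hy, if_true, ← mul_sum, hp, ht, hs, powerSum]
    ring
  have h : ∀ y, p y * (p y * (1 - 4 * p y + 2 * s) + t + 2 * (p y - s) * s + (p y - s) ^ 2)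
      = (1 + 2 * s) * p y ^ 2 - 3 * p y ^ 3 + (t - s ^ 2) * p y := by
    intro y; ring
  rw [sum_congr rfl fun y hy => by rw [inner y hy]]
  simp only [h, sum_add_distrib, sum_sub_distrib, ← mul_sum, hp]
  simp only [hs, ht, powerSum]
  ring

lemma sum_sum_mul_ite_eq_sum_sum_mul_centeredKernel {s : Finset ℕ} {B : ℕ → ℕ → ℝ}
    (hrow : ∀ i ∈ s, ∑ j ∈ s, B i j = 0) (hcol : ∀ j ∈ s, ∑ i ∈ s, B i j = 0)
    (x : ℕ → ℕ) :
    ∑ i ∈ s, ∑ j ∈ s, B i j * (if x i = x j then 1 else 0)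
      = ∑ i ∈ s, ∑ j ∈ s, B i j * centeredKernel K p (x i) (x j) := by
  have h : ∀ i j, B i j * centeredKernel K p (x i) (x j)
      = B i j * (if x i = x j then 1 else 0) - p (x i) * B i j - p (x j) * B i j
        + powerSum K p 2 * B i j := by
    intro i j; simp only [centeredKernel]; ring
  have hr : ∑ i ∈ s, ∑ j ∈ s, p (x i) * B i j = 0 :=
    sum_eq_zero fun i hi => by rw [← mul_sum, hrow i hi, mul_zero]
  have hc : ∑ i ∈ s, ∑ j ∈ s, p (x j) * B i j = 0 := by
    rw [sum_comm]; exact sum_eq_zero fun j hj => by rw [← mul_sum, hcol j hj, mul_zero]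
  have hs : ∑ i ∈ s, ∑ j ∈ s, powerSum K p 2 * B i j = 0 :=
    sum_eq_zero fun i hi => by rw [← mul_sum, hrow i hi, mul_zero]
  simp only [h, sum_add_distrib, sum_sub_distrib, hr, hc, hs, sub_zero, add_zero]

end Kernel

lemma sum_sub_mul_div_eq_zero {s : Finset ℕ} {A : ℕ → ℕ → ℝ} {k : ℕ → ℝ} {m : ℝ}
    (hm : m ≠ 0) (hk : ∀ i ∈ s, k i = ∑ j ∈ s, A i j) (hksum : ∑ i ∈ s, k i = 2 * m)
    {i : ℕ} (hi : i ∈ s) :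
    ∑ j ∈ s, (A i j - k i * k j / (2 * m)) = 0 := by
  rw [sum_sub_distrib, ← sum_div, ← mul_sum, hksum, ← hk i hi]
  field_simp
  ring

section Labeling

variable {Ω : Type*} [MeasureSpace Ω]

structure IsIIDLabeling (c : ℕ → Ω → ℕ) (K : ℕ) (p : ℕ → ℝ) : Prop where
  measurable : ∀ i, Measurable (c i)
  mem_Icc : ∀ i ω, c i ω ∈ Icc 1 K
  iIndepFun : iIndepFun c ℙ
  measure_eq : ∀ i, ∀ u ∈ Icc 1 K, ℙ {ω | c i ω = u} = ENNReal.ofReal (p u)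
  nonneg : ∀ u ∈ Icc 1 K, 0 ≤ p u
  sum_eq_one : ∑ u ∈ Icc 1 K, p u = 1

namespace IsIIDLabeling

variable {K : ℕ} {p : ℕ → ℝ} {c : ℕ → Ω → ℕ} (hc : IsIIDLabeling c K p)
include hc

lemma indepFun_triple {i j a b : ℕ} (hij : i ≠ j) (hia : i ≠ a) (hib : i ≠ b) :
    IndepFun (c i) (fun ω => (c j ω, c a ω, c b ω)) ℙ := by
  have h := hc.iIndepFun.indepFun_finset {i} {j, a, b} (by simp [hij, hia, hib]) hc.measurable
  exact h.comp (measurable_pi_apply ⟨i, mem_singleton_self i⟩)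
    ((measurable_pi_apply ⟨j, by simp⟩).prodMk
      ((measurable_pi_apply ⟨a, by simp⟩).prodMk (measurable_pi_apply ⟨b, by simp⟩)))

lemma integral_ite_eq {i x : ℕ} (hx : x ∈ Icc 1 K) :
    ∫ ω, (if c i ω = x then (1 : ℝ) else 0) = p x := by
  calc ∫ ω, (if c i ω = x then (1 : ℝ) else 0)
      = ∫ ω, {ω | c i ω = x}.indicator 1 ω := by
        congr 1 with ω; simp [Set.indicator_apply]
    _ = p x := by
        rw [integral_indicator_one (s := {ω | c i ω = x})
          (hc.measurable i (measurableSet_singleton x)), measureReal_def, hc.measure_eq i x hx,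
          ENNReal.toReal_ofReal (hc.nonneg x hx)]

lemma integral_comp_of_indepFun {β : Type*} [MeasurableSpace β] [DiscreteMeasurableSpace β]
    {i : ℕ} {Y : Ω → β} (hind : IndepFun (c i) Y ℙ) (g : ℕ → β → ℝ)
    (hg : ∀ x, Integrable (fun ω => g x (Y ω)) ℙ) :
    ∫ ω, g (c i ω) (Y ω) = ∫ ω, ∑ x ∈ Icc 1 K, p x * g x (Y ω) := by
  have hmeas_ind : ∀ x : ℕ, Measurable fun n : ℕ => if n = x then (1 : ℝ) else 0 :=
    fun _ => .of_discrete
  have hmeas : ∀ x, Measurable fun ω => if c i ω = x then (1 : ℝ) else 0 :=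
    fun x => (hmeas_ind x).comp (hc.measurable i)
  have hint : ∀ x,
      Integrable (fun ω => (if c i ω = x then (1 : ℝ) else 0) * g x (Y ω)) ℙ :=
    fun x => (hg x).bdd_mul (c := 1) (hmeas x).aestronglyMeasurable
      (ae_of_all _ fun ω => by split_ifs <;> simp)
  calc ∫ ω, g (c i ω) (Y ω)
      = ∫ ω, ∑ x ∈ Icc 1 K, (if c i ω = x then (1 : ℝ) else 0) * g x (Y ω) := by
        congr 1 with ω
        simp only [ite_mul, one_mul, zero_mul, sum_ite_eq, hc.mem_Icc i ω, if_true]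
    _ = ∑ x ∈ Icc 1 K, p x * ∫ ω, g x (Y ω) := by
        rw [integral_finsetSum _ fun x _ => hint x]
        refine sum_congr rfl fun x hx => ?_
        rw [← hc.integral_ite_eq hx]
        exact (hind.comp (hmeas_ind x) (.of_discrete (f := g x)))
          |>.integral_fun_mul_eq_mul_integral (hmeas x).aestronglyMeasurable (hg x).1
    _ = ∫ ω, ∑ x ∈ Icc 1 K, p x * g x (Y ω) := by
        rw [integral_finsetSum _ fun x _ => (hg x).const_mul (p x)]
        simp only [integral_const_mul]

end IsIIDLabeling

variable [IsProbabilityMeasure (ℙ : Measure Ω)]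

lemma memLp_comp_of_mem_finset {β : Type*} [MeasurableSpace β] [DiscreteMeasurableSpace β]
    {Y : Ω → β} (hY : Measurable Y) {S : Finset β} (hYS : ∀ ω, Y ω ∈ S) (g : β → ℝ)
    (q : ENNReal) : MemLp (fun ω => g (Y ω)) q ℙ :=
  MemLp.of_bound (Measurable.of_discrete.comp hY).aestronglyMeasurable (∑ s ∈ S, ‖g s‖)
    (ae_of_all _ fun ω =>
      single_le_sum (f := fun s => ‖g s‖) (fun _ _ => norm_nonneg _) (hYS ω))

namespace IsIIDLabeling

variable {K : ℕ} {p : ℕ → ℝ} {c : ℕ → Ω → ℕ} (hc : IsIIDLabeling c K p)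
include hc

lemma integral_comp (i : ℕ) (g : ℕ → ℝ) :
    ∫ ω, g (c i ω) = ∑ x ∈ Icc 1 K, p x * g x := by
  simpa using hc.integral_comp_of_indepFun (indepFun_const_right (c i) ()) (fun x _ => g x)
    (fun x => integrable_const (g x))

lemma integrable_comp (i : ℕ) (g : ℕ → ℝ) : Integrable (fun ω => g (c i ω)) ℙ :=
  (memLp_comp_of_mem_finset (hc.measurable i) (hc.mem_Icc i) g 1).integrable le_rfl

lemma memLp_centeredKernel (i j : ℕ) (q : ENNReal) :
    MemLp (fun ω => centeredKernel K p (c i ω) (c j ω)) q ℙ :=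
  memLp_comp_of_mem_finset ((hc.measurable i).prodMk (hc.measurable j))
    (S := Icc 1 K ×ˢ Icc 1 K) (fun ω => by simp [hc.mem_Icc])
    (fun z => centeredKernel K p z.1 z.2) q

lemma integral_centeredKernel (i j : ℕ) :
    ∫ ω, centeredKernel K p (c i ω) (c j ω) = if i = j then 1 - powerSum K p 2 else 0 := by
  split_ifs with hij
  · subst hij
    exact (hc.integral_comp i fun x => centeredKernel K p x x).trans
      (sum_mul_centeredKernel_self hc.sum_eq_one)
  · rw [hc.integral_comp_of_indepFun (hc.iIndepFun.indepFun hij) (centeredKernel K p)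
      fun x => hc.integrable_comp j (centeredKernel K p x)]
    simp [sum_mul_centeredKernel_left hc.sum_eq_one (hc.mem_Icc j _)]

lemma integral_centeredKernel_mul_eq_zero {i j a b : ℕ}
    (hij : i ≠ j) (hia : i ≠ a) (hib : i ≠ b) :
    ∫ ω, centeredKernel K p (c i ω) (c j ω) * centeredKernel K p (c a ω) (c b ω) = 0 := by
  rw [hc.integral_comp_of_indepFun (hc.indepFun_triple hij hia hib)
    (fun x z => centeredKernel K p x z.1 * centeredKernel K p z.2.1 z.2.2)
    fun x => (memLp_comp_of_mem_finset
      ((hc.measurable j).prodMk ((hc.measurable a).prodMk (hc.measurable b)))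
      (S := Icc 1 K ×ˢ Icc 1 K ×ˢ Icc 1 K) (fun ω => by simp [hc.mem_Icc])
      (fun z => centeredKernel K p x z.1 * centeredKernel K p z.2.1 z.2.2) 1).integrable le_rfl]
  simp [← mul_assoc, ← sum_mul, sum_mul_centeredKernel_left hc.sum_eq_one (hc.mem_Icc j _)]

lemma variance_centeredKernel_self (i : ℕ) :
    Var[fun ω => centeredKernel K p (c i ω) (c i ω); ℙ]
      = 4 * (powerSum K p 3 - powerSum K p 2 ^ 2) := by
  rw [variance_eq_sub (hc.memLp_centeredKernel i i 2),
    ← sum_mul_centeredKernel_self_sq hc.sum_eq_one, ← sum_mul_centeredKernel_self hc.sum_eq_one,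
    ← hc.integral_comp i fun x => centeredKernel K p x x,
    ← hc.integral_comp i fun x => centeredKernel K p x x ^ 2]
  rfl

lemma variance_centeredKernel_of_ne {i j : ℕ} (hij : i ≠ j) :
    Var[fun ω => centeredKernel K p (c i ω) (c j ω); ℙ]
      = powerSum K p 2 + powerSum K p 2 ^ 2 - 2 * powerSum K p 3 := by
  rw [variance_eq_sub (hc.memLp_centeredKernel i j 2), hc.integral_centeredKernel, if_neg hij,
    ← sum_mul_sum_mul_centeredKernel_sq hc.sum_eq_one,
    ← hc.integral_comp j fun y => ∑ x ∈ Icc 1 K, p x * centeredKernel K p x y ^ 2,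
    ← hc.integral_comp_of_indepFun (hc.iIndepFun.indepFun hij)
      (fun x y => centeredKernel K p x y ^ 2)
      fun x => hc.integrable_comp j fun y => centeredKernel K p x y ^ 2]
  simp

lemma covariance_centeredKernel_eq_zero {i j a b : ℕ}
    (hij : i ≠ j) (hia : i ≠ a) (hib : i ≠ b) :
    cov[fun ω => centeredKernel K p (c i ω) (c j ω),
      fun ω => centeredKernel K p (c a ω) (c b ω); ℙ] = 0 := by
  rw [covariance_eq_sub (hc.memLp_centeredKernel i j 2) (hc.memLp_centeredKernel a b 2),
    hc.integral_centeredKernel i j, if_neg hij, zero_mul, sub_zero]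
  exact hc.integral_centeredKernel_mul_eq_zero hij hia hib

lemma covariance_centeredKernel_self (i a b : ℕ) :
    cov[fun ω => centeredKernel K p (c i ω) (c i ω),
      fun ω => centeredKernel K p (c a ω) (c b ω); ℙ]
      = if a = i ∧ b = i then 4 * (powerSum K p 3 - powerSum K p 2 ^ 2) else 0 := by
  by_cases ha : a = i
  · subst ha
    by_cases hb : b = a
    · subst hb
      rw [covariance_self (hc.memLp_centeredKernel _ _ 2).aemeasurable,
        hc.variance_centeredKernel_self, if_pos ⟨rfl, rfl⟩]
    · have hswap : (fun ω => centeredKernel K p (c a ω) (c b ω))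
          = fun ω => centeredKernel K p (c b ω) (c a ω) :=
        funext fun ω => centeredKernel_comm _ _
      rw [covariance_comm, hswap, hc.covariance_centeredKernel_eq_zero hb hb hb,
        if_neg (by omega)]
  rw [if_neg (by omega)]
  by_cases hb : b = i
  · subst hb
    rw [covariance_comm, hc.covariance_centeredKernel_eq_zero ha ha ha]
  by_cases hab : a = b
  · subst hab
    have hind := (hc.iIndepFun.indepFun (Ne.symm ha)).comp
      (Measurable.of_discrete (f := fun x => centeredKernel K p x x))
      (Measurable.of_discrete (f := fun x => centeredKernel K p x x))
    exact hind.covariance_eq_zero (hc.memLp_centeredKernel i i 2)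
      (hc.memLp_centeredKernel a a 2)
  rw [covariance_comm, hc.covariance_centeredKernel_eq_zero hab ha ha]

lemma covariance_centeredKernel_of_ne {i j : ℕ} (hij : i ≠ j) (a b : ℕ) :
    cov[fun ω => centeredKernel K p (c i ω) (c j ω),
      fun ω => centeredKernel K p (c a ω) (c b ω); ℙ]
      = (if a = i ∧ b = j then powerSum K p 2 + powerSum K p 2 ^ 2 - 2 * powerSum K p 3 else 0)
        + (if a = j ∧ b = i then powerSum K p 2 + powerSum K p 2 ^ 2 - 2 * powerSum K p 3
            else 0) := by
  have hswap : (fun ω => centeredKernel K p (c i ω) (c j ω))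
      = fun ω => centeredKernel K p (c j ω) (c i ω) := funext fun ω => centeredKernel_comm _ _
  have hvar : cov[fun ω => centeredKernel K p (c i ω) (c j ω),
      fun ω => centeredKernel K p (c i ω) (c j ω); ℙ]
        = powerSum K p 2 + powerSum K p 2 ^ 2 - 2 * powerSum K p 3 := by
    rw [covariance_self (hc.memLp_centeredKernel i j 2).aemeasurable,
      hc.variance_centeredKernel_of_ne hij]
  by_cases h₁ : a = i ∧ b = j
  · obtain ⟨rfl, rfl⟩ := h₁
    rw [hvar, if_pos ⟨rfl, rfl⟩, if_neg (by omega), add_zero]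
  by_cases h₂ : a = j ∧ b = i
  · obtain ⟨rfl, rfl⟩ := h₂
    rw [← hswap, hvar, if_neg h₁, if_pos ⟨rfl, rfl⟩, zero_add]
  rw [if_neg h₁, if_neg h₂, add_zero]
  by_cases hi : i = a ∨ i = b
  · rw [hswap]
    exact hc.covariance_centeredKernel_eq_zero (Ne.symm hij) (by omega) (by omega)
  · exact hc.covariance_centeredKernel_eq_zero hij (by omega) (by omega)

lemma covariance_centeredKernel (i j a b : ℕ) :
    cov[fun ω => centeredKernel K p (c i ω) (c j ω),
      fun ω => centeredKernel K p (c a ω) (c b ω); ℙ]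
      = if i = j then
          (if a = i ∧ b = i then 4 * (powerSum K p 3 - powerSum K p 2 ^ 2) else 0)
        else
          (if a = i ∧ b = j then powerSum K p 2 + powerSum K p 2 ^ 2 - 2 * powerSum K p 3 else 0)
          + (if a = j ∧ b = i then powerSum K p 2 + powerSum K p 2 ^ 2 - 2 * powerSum K p 3
              else 0) := by
  rcases eq_or_ne i j with rfl | hij
  · rw [if_pos rfl, hc.covariance_centeredKernel_self]
  · rw [if_neg hij, hc.covariance_centeredKernel_of_ne hij]

lemma integral_sum_sum_mul_centeredKernel (s : Finset ℕ) (B : ℕ → ℕ → ℝ) :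
    ∫ ω, ∑ i ∈ s, ∑ j ∈ s, B i j * centeredKernel K p (c i ω) (c j ω)
      = (1 - powerSum K p 2) * ∑ i ∈ s, B i i := by
  have hint : ∀ i j, Integrable (fun ω => B i j * centeredKernel K p (c i ω) (c j ω)) ℙ :=
    fun i j => ((hc.memLp_centeredKernel i j 1).integrable le_rfl).const_mul (B i j)
  rw [integral_finsetSum _ fun i _ => integrable_finsetSum _ fun j _ => hint i j, mul_sum]
  refine sum_congr rfl fun i hi => ?_
  simp [integral_finsetSum _ fun j _ => hint i j, integral_const_mul,
    hc.integral_centeredKernel, hi, mul_comm]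

lemma variance_sum_sum_mul_centeredKernel (s : Finset ℕ) (B : ℕ → ℕ → ℝ)
    (hB : ∀ i ∈ s, ∀ j ∈ s, B i j = B j i) :
    Var[fun ω => ∑ i ∈ s, ∑ j ∈ s, B i j * centeredKernel K p (c i ω) (c j ω); ℙ]
      = 4 * (powerSum K p 3 - powerSum K p 2 ^ 2) * ∑ i ∈ s, B i i ^ 2
        + 2 * (powerSum K p 2 + powerSum K p 2 ^ 2 - 2 * powerSum K p 3)
          * ∑ i ∈ s, ∑ j ∈ s, if i ≠ j then B i j ^ 2 else 0 := by
  have hmem : ∀ i j, MemLp (fun ω => B i j * centeredKernel K p (c i ω) (c j ω)) 2 ℙ :=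
    fun i j => (hc.memLp_centeredKernel i j 2).const_mul (B i j)
  rw [variance_fun_sum' (X := fun i ω => ∑ j ∈ s, B i j * centeredKernel K p (c i ω) (c j ω))
    fun i _ => memLp_finsetSum _ fun j _ => hmem i j]
  simp only [covariance_fun_sum_fun_sum' (fun j _ => hmem _ j) (fun b _ => hmem _ b),
    covariance_const_mul_left, covariance_const_mul_right, hc.covariance_centeredKernel]
  set v₁ := 4 * (powerSum K p 3 - powerSum K p 2 ^ 2)
  set v₂ := powerSum K p 2 + powerSum K p 2 ^ 2 - 2 * powerSum K p 3
  rw [sum_congr rfl fun i _ => sum_comm, mul_sum, mul_sum, ← sum_add_distrib]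
  refine sum_congr rfl fun i hi => ?_
  rw [show v₁ * B i i ^ 2 = ∑ j ∈ s, if i = j then v₁ * B i j ^ 2 else 0 by simp [hi],
    mul_sum, ← sum_add_distrib]
  refine sum_congr rfl fun j hj => ?_
  rcases eq_or_ne i j with rfl | hij
  · simp only [if_true, ite_and, mul_ite, mul_zero, sum_ite_irrel, sum_const_zero, sum_ite_eq',
      hi, ne_eq, not_true, if_false]
    ring
  · simp only [hij, if_false, ite_and, mul_add, mul_ite, mul_zero, sum_add_distrib, sum_ite_irrel,
      sum_const_zero, sum_ite_eq', hi, hj, if_true, ne_eq, not_false_eq_true, hB j hj i hi]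
    ring

end IsIIDLabeling

end Labeling

theorem modularity_mean_and_variance_general
    {Ω : Type*} [MeasureSpace Ω] [IsProbabilityMeasure (ℙ : Measure Ω)]
    (n : ℕ) (A : ℕ → ℕ → ℝ) (m : ℕ) (k : ℕ → ℝ)
    (hAsymm : ∀ i ∈ Icc 1 n, ∀ j ∈ Icc 1 n, A i j = A j i)
    (hAdiag : ∀ i ∈ Icc 1 n, A i i = 0)
    (hm : 1 ≤ m)
    (hk : ∀ i ∈ Icc 1 n, k i = ∑ j ∈ Icc 1 n, A i j)
    (hksum : ∑ i ∈ Icc 1 n, k i = 2 * (m : ℝ))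
    (K : ℕ) (p : ℕ → ℝ)
    (hp0 : ∀ j ∈ Icc 1 K, 0 ≤ p j) (hp1 : ∑ j ∈ Icc 1 K, p j = 1)
    (p2 p3 : ℝ)
    (hp2 : p2 = ∑ j ∈ Icc 1 K, (p j) ^ 2) (hp3 : p3 = ∑ j ∈ Icc 1 K, (p j) ^ 3)
    (c : ℕ → Ω → ℕ)
    (hcmeas : ∀ i, Measurable (c i))
    (hcrange : ∀ i ω, c i ω ∈ Icc 1 K)
    (hcindep : iIndepFun c ℙ)
    (hcdist : ∀ i, ∀ j ∈ Icc 1 K, (ℙ {ω | c i ω = j}) = ENNReal.ofReal (p j))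
    (B : ℕ → ℕ → ℝ) (hB : ∀ i j, B i j = A i j - k i * k j / (2 * (m : ℝ)))
    (Q : Ω → ℝ)
    (hQ : ∀ ω, Q ω = (1 / (2 * (m : ℝ))) *
      ∑ i ∈ Icc 1 n, ∑ j ∈ Icc 1 n, B i j * (if c i ω = c j ω then (1 : ℝ) else 0)) :
    (∫ ω, Q ω ∂ℙ = -((1 - p2) / (4 * (m : ℝ) ^ 2)) * ∑ i ∈ Icc 1 n, (k i) ^ 2)
    ∧ variance Q ℙ
        = ((p2 + p2 ^ 2 - 2 * p3) / (2 * (m : ℝ) ^ 2)) *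
            (∑ i ∈ Icc 1 n, ∑ j ∈ Icc 1 n, if i ≠ j then (B i j) ^ 2 else 0)
          + ((p3 - p2 ^ 2) / (m : ℝ) ^ 2) * ∑ i ∈ Icc 1 n, (B i i) ^ 2 := by
  have hm0 : (m : ℝ) ≠ 0 := Nat.cast_ne_zero.2 (by omega)
  have hc : IsIIDLabeling c K p := ⟨hcmeas, hcrange, hcindep, hcdist, hp0, hp1⟩
  have hB_symm : ∀ i ∈ Icc 1 n, ∀ j ∈ Icc 1 n, B i j = B j i := fun i hi j hj => by
    rw [hB, hB, hAsymm i hi j hj, mul_comm (k i)]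
  have hB_row : ∀ i ∈ Icc 1 n, ∑ j ∈ Icc 1 n, B i j = 0 := fun i hi => by
    simp only [hB]; exact sum_sub_mul_div_eq_zero hm0 hk hksum hi
  have hB_col : ∀ j ∈ Icc 1 n, ∑ i ∈ Icc 1 n, B i j = 0 := fun j hj => by
    rw [sum_congr rfl fun i hi => hB_symm i hi j hj, hB_row j hj]
  have hB_trace : ∑ i ∈ Icc 1 n, B i i = -(∑ i ∈ Icc 1 n, k i ^ 2) / (2 * m) := by
    rw [neg_div, sum_div, ← sum_neg_distrib]
    exact sum_congr rfl fun i hi => by rw [hB, hAdiag i hi]; ring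
  obtain rfl : Q = fun ω => 1 / (2 * (m : ℝ)) *
      ∑ i ∈ Icc 1 n, ∑ j ∈ Icc 1 n, B i j * centeredKernel K p (c i ω) (c j ω) := by
    ext ω
    rw [hQ, sum_sum_mul_ite_eq_sum_sum_mul_centeredKernel hB_row hB_col]
  obtain rfl : p2 = powerSum K p 2 := hp2
  obtain rfl : p3 = powerSum K p 3 := hp3
  constructor
  · rw [integral_const_mul, hc.integral_sum_sum_mul_centeredKernel, hB_trace]
    field_simp
    ring
  · rw [variance_const_mul, hc.variance_sum_sum_mul_centeredKernel _ _ hB_symm]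
    field_simp
    ring

/-- Mean and variance of the modularity under free labeling. -/
theorem modularity_mean_and_variance
    {Ω : Type*} [MeasureSpace Ω] [IsProbabilityMeasure (ℙ : Measure Ω)]
    (n : ℕ) (A : ℕ → ℕ → ℝ) (m : ℕ) (k : ℕ → ℝ)
    (hA01 : ∀ i ∈ Icc 1 n, ∀ j ∈ Icc 1 n, A i j = 0 ∨ A i j = 1)
    (hAsymm : ∀ i ∈ Icc 1 n, ∀ j ∈ Icc 1 n, A i j = A j i)
    (hAdiag : ∀ i ∈ Icc 1 n, A i i = 0)
    (hm : 1 ≤ m)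
    (hk : ∀ i ∈ Icc 1 n, k i = ∑ j ∈ Icc 1 n, A i j)
    (hksum : ∑ i ∈ Icc 1 n, k i = 2 * (m : ℝ))
    (K : ℕ) (hK : 1 ≤ K) (p : ℕ → ℝ)
    (hp0 : ∀ j ∈ Icc 1 K, 0 ≤ p j) (hp1 : ∑ j ∈ Icc 1 K, p j = 1)
    (p2 p3 : ℝ)
    (hp2 : p2 = ∑ j ∈ Icc 1 K, (p j) ^ 2) (hp3 : p3 = ∑ j ∈ Icc 1 K, (p j) ^ 3)
    (c : ℕ → Ω → ℕ)
    (hcmeas : ∀ i, Measurable (c i))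
    (hcrange : ∀ i ω, c i ω ∈ Icc 1 K)
    (hcindep : iIndepFun c ℙ)
    (hcdist : ∀ i, ∀ j ∈ Icc 1 K, (ℙ {ω | c i ω = j}) = ENNReal.ofReal (p j))
    (B : ℕ → ℕ → ℝ) (hB : ∀ i j, B i j = A i j - k i * k j / (2 * (m : ℝ)))
    (Q : Ω → ℝ)
    (hQ : ∀ ω, Q ω = (1 / (2 * (m : ℝ))) *
      ∑ i ∈ Icc 1 n, ∑ j ∈ Icc 1 n, B i j * (if c i ω = c j ω then (1 : ℝ) else 0)) :
    (∫ ω, Q ω ∂ℙ = -((1 - p2) / (4 * (m : ℝ) ^ 2)) * ∑ i ∈ Icc 1 n, (k i) ^ 2)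
    ∧ variance Q ℙ
        = ((p2 + p2 ^ 2 - 2 * p3) / (2 * (m : ℝ) ^ 2)) *
            (∑ i ∈ Icc 1 n, ∑ j ∈ Icc 1 n, if i ≠ j then (B i j) ^ 2 else 0)
          + ((p3 - p2 ^ 2) / (m : ℝ) ^ 2) * ∑ i ∈ Icc 1 n, (B i i) ^ 2 :=
  modularity_mean_and_variance_general n A m k hAsymm hAdiag hm hk hksum K p hp0 hp1 p2 p3 hp2 hp3 c
    hcmeas hcrange hcindep hcdist B hB Q hQ
end
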